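/- Let B ≥ 1 and let (p,q) ∈ Rat_B be arbitrary. For t ∈ [0,1] define p_t(z) = e^{−2πiBt} p(e^{2πit} z) and q_t(z) = e^{−2πiBt} q(e^{2πit} z). Then each (p_t, q_t) is a pair of monic degree-B polynomials lying in Rat_B, (p_0,q_0) = (p_1,q_1) = (p,q), and Res(p_t, q_t) = e^{−2πiB²t}·Res(p,q) for all t; in particular, along this loop (which represents a 2π spatial rotation of the corresponding rational map) the resultant winds exactly −B² times around 0. -/

import Mathlib

open Polynomial Complex
open scoped Real

/-- The resultant `Res(p,q) = ∏_{i,j} (z_i - p_j)` of two monic polynomials, written as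
`∏_i q(z_i)` over the roots `z_i` of `p` (with multiplicity). -/
noncomputable def res (p q : Polynomial ℂ) : ℂ :=
  (p.roots.map fun z => q.eval z).prod

/-- `p_t(z) = e^{-2πiBt} p(e^{2πit} z)`: the 2π spatial rotation loop applied to `p`. -/
noncomputable def spinPoly (B : ℕ) (p : Polynomial ℂ) (t : ℝ) : Polynomial ℂ :=
  C (exp (-(2 * π * I * B * t))) * p.comp (C (exp (2 * π * I * t)) * X)

/-!
Substituting `e^{2πit} z` for `z` divides every root of `p` by `e^{2πit}`, and the factor
`e^{-2πiBt}` restores monicity. Evaluating `q_t` at these roots gives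
`Res(p_t, q_t) = ∏_i e^{-2πiBt} q(z_i) = e^{-2πiB²t} Res(p,q)`, so along the loop the resultant is
`Res(p,q) · e^{ct}` with `c = -2πiB²`, whose logarithmic derivative is the constant `c`.
-/

section SpinPoly

variable (B : ℕ) (p : ℂ[X]) (t : ℝ)

lemma eval_spinPoly (z : ℂ) :
    (spinPoly B p t).eval z = exp (-(2 * π * I * B * t)) * p.eval (exp (2 * π * I * t) * z) := by
  simp [spinPoly]

lemma natDegree_spinPoly : (spinPoly B p t).natDegree = p.natDegree := by
  rw [spinPoly, natDegree_C_mul (exp_ne_zero _), natDegree_comp,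
    natDegree_C_mul_X _ (exp_ne_zero _), mul_one]

lemma leadingCoeff_spinPoly :
    (spinPoly B p t).leadingCoeff
      = exp (-(2 * π * I * B * t)) * exp (2 * π * I * t) ^ p.natDegree * p.leadingCoeff := by
  rw [spinPoly, leadingCoeff_mul, leadingCoeff_C, leadingCoeff_comp
    (by rw [natDegree_C_mul_X _ (exp_ne_zero _)]; exact one_ne_zero),
    leadingCoeff_C_mul_X]
  ring

lemma roots_spinPoly :
    (spinPoly B p t).roots = p.roots.map fun z => (exp (2 * π * I * t))⁻¹ * z := by
  have h := roots_comp_C_mul_X_add_C p (exp (2 * π * I * t)) 0 (exp_ne_zero _).isUnit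
  rw [map_zero, add_zero] at h
  rw [spinPoly, roots_C_mul _ (exp_ne_zero _), h]
  simp

lemma spinPoly_zero : spinPoly B p 0 = p := by
  simp [spinPoly]

lemma spinPoly_one : spinPoly B p 1 = p := by
  have hturn : exp (-(2 * π * I * B)) = 1 := by
    rw [mul_comm, exp_neg, exp_nat_mul, exp_two_pi_mul_I, one_pow, inv_one]
  simp [spinPoly, hturn]

variable {B p}

lemma monic_spinPoly (hm : p.Monic) (hd : p.natDegree = B) : (spinPoly B p t).Monic := by
  rw [Monic, leadingCoeff_spinPoly, hm.leadingCoeff, hd, mul_one, ← exp_nat_mul, ← exp_add]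
  convert exp_zero using 2
  ring

end SpinPoly

lemma res_ne_zero {p q : ℂ[X]} (h : ∀ z : ℂ, ¬(p.eval z = 0 ∧ q.eval z = 0)) : res p q ≠ 0 := by
  refine Multiset.prod_ne_zero fun h0 => ?_
  obtain ⟨z, hz, hqz⟩ := Multiset.mem_map.mp h0
  exact h z ⟨isRoot_of_mem_roots hz, hqz⟩

lemma res_spinPoly {B : ℕ} {p : ℂ[X]} (hd : p.natDegree = B) (q : ℂ[X]) (t : ℝ) :
    res (spinPoly B p t) (spinPoly B q t) = exp (-(2 * π * I * B ^ 2 * t)) * res p q := by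
  have hu : exp (2 * π * I * t) ≠ 0 := exp_ne_zero _
  simp only [res, roots_spinPoly, Multiset.map_map, Function.comp_def, eval_spinPoly,
    mul_inv_cancel_left₀ hu, Multiset.prod_map_mul, Multiset.map_const', Multiset.prod_replicate,
    IsAlgClosed.card_roots_eq_natDegree, hd, ← exp_nat_mul]
  ring_nf

lemma logDeriv_cexp_mul_ofReal_mul_const (c : ℂ) {R : ℂ} (hR : R ≠ 0) :
    logDeriv (fun s : ℝ => exp (c * s) * R) = fun _ => c := by
  funext t
  have h : HasDerivAt (fun s : ℝ => exp (c * s) * R) (exp (c * t) * (c * 1) * R) t :=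
    (((hasDerivAt_id (t : ℂ)).const_mul c).cexp.mul_const R).comp_ofReal
  rw [logDeriv_apply, h.deriv]
  field_simp

lemma no_common_root_spinPoly {B : ℕ} {p q : ℂ[X]} (h : ∀ z : ℂ, ¬(p.eval z = 0 ∧ q.eval z = 0))
    (t : ℝ) (z : ℂ) : ¬((spinPoly B p t).eval z = 0 ∧ (spinPoly B q t).eval z = 0) := by
  simp only [eval_spinPoly, mul_eq_zero, exp_ne_zero, false_or]
  exact h _

theorem two_pi_rotation_loop_general (B : ℕ) (p q : Polynomial ℂ)
    (hpm : p.Monic) (hpd : p.natDegree = B) (hqm : q.Monic) (hqd : q.natDegree = B)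
    (hnoroot : ∀ z : ℂ, ¬(p.eval z = 0 ∧ q.eval z = 0)) :
    (∀ t ∈ Set.Icc (0:ℝ) 1,
      (spinPoly B p t).Monic ∧ (spinPoly B p t).natDegree = B ∧
      (spinPoly B q t).Monic ∧ (spinPoly B q t).natDegree = B ∧
      (∀ z : ℂ, ¬((spinPoly B p t).eval z = 0 ∧ (spinPoly B q t).eval z = 0)) ∧
      res (spinPoly B p t) (spinPoly B q t)
        = exp (-(2 * π * I * B ^ 2 * t)) * res p q) ∧
    (spinPoly B p 0 = p ∧ spinPoly B q 0 = q ∧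
      spinPoly B p 1 = p ∧ spinPoly B q 1 = q) ∧
    1 / (2 * π * I) *
        ∫ t in (0:ℝ)..1,
          deriv (fun s => res (spinPoly B p s) (spinPoly B q s)) t /
            res (spinPoly B p t) (spinPoly B q t)
      = -((B : ℂ) ^ 2) := by
  refine ⟨fun t _ => ⟨monic_spinPoly t hpm hpd, (natDegree_spinPoly B p t).trans hpd,
      monic_spinPoly t hqm hqd, (natDegree_spinPoly B q t).trans hqd,
      no_common_root_spinPoly hnoroot t, res_spinPoly hpd q t⟩,
    ⟨spinPoly_zero B p, spinPoly_zero B q, spinPoly_one B p, spinPoly_one B q⟩, ?_⟩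
  have hloop : (fun s : ℝ => exp (-(2 * π * I * B ^ 2) * s) * res p q)
      = fun s : ℝ => res (spinPoly B p s) (spinPoly B q s) := by
    funext s
    rw [res_spinPoly hpd, neg_mul]
  have hlog : logDeriv (fun s : ℝ => res (spinPoly B p s) (spinPoly B q s))
      = fun _ => -(2 * π * I * B ^ 2) := by
    rw [← hloop]
    exact logDeriv_cexp_mul_ofReal_mul_const _ (res_ne_zero hnoroot)
  simp only [← logDeriv_apply, hlog, intervalIntegral.integral_const, sub_zero, one_smul]
  field_simp [Real.pi_ne_zero]

/-- For `(p,q) ∈ Rat_B`, the `2π` spatial rotation loop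
`(p_t, q_t) = (e^{-2πiBt} p(e^{2πit}z), e^{-2πiBt} q(e^{2πit}z))` stays in `Rat_B`,
is a loop based at `(p,q)`, satisfies `Res(p_t,q_t) = e^{-2πiB²t}·Res(p,q)`, and along
it the resultant winds exactly `-B²` times around `0`. -/
theorem two_pi_rotation_loop (B : ℕ) (hB : 1 ≤ B) (p q : Polynomial ℂ)
    (hpm : p.Monic) (hpd : p.natDegree = B) (hqm : q.Monic) (hqd : q.natDegree = B)
    (hnoroot : ∀ z : ℂ, ¬(p.eval z = 0 ∧ q.eval z = 0)) :
    (∀ t ∈ Set.Icc (0:ℝ) 1,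
      (spinPoly B p t).Monic ∧ (spinPoly B p t).natDegree = B ∧
      (spinPoly B q t).Monic ∧ (spinPoly B q t).natDegree = B ∧
      (∀ z : ℂ, ¬((spinPoly B p t).eval z = 0 ∧ (spinPoly B q t).eval z = 0)) ∧
      res (spinPoly B p t) (spinPoly B q t)
        = exp (-(2 * π * I * B ^ 2 * t)) * res p q) ∧
    (spinPoly B p 0 = p ∧ spinPoly B q 0 = q ∧
      spinPoly B p 1 = p ∧ spinPoly B q 1 = q) ∧
    1 / (2 * π * I) *
        ∫ t in (0:ℝ)..1,
          deriv (fun s => res (spinPoly B p s) (spinPoly B q s)) t /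
            res (spinPoly B p t) (spinPoly B q t)
      = -((B : ℂ) ^ 2) :=
  two_pi_rotation_loop_general B p q hpm hpd hqm hqd hnoroot
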